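/- For all natural numbers x and y with y ≥ 2 and 3y − 2 ≤ x ≤ 3y, the regularized incomplete beta function satisfies I_{3/4}(x, y) > 0.444. -/

import Mathlib

/-!
For natural parameters, `I_z(a + 1, b + 1)` is the binomial tail `P(Bin(a + b + 1, z) ≥ a + 1)`:
the sum of the Bernstein polynomials `B_{a+b+1, j}` over `j ≥ a + 1` telescopes under
differentiation to a multiple of the integrand `t^a (1 - t)^b`.

Raising the threshold and the number of trials by one lowers a binomial tail, so it suffices to
take `x = 3y`, i.e. `P(Bin(4m + 7, 3/4) ≥ 3m + 6)`. Passing from `m` to `m + 1` adds four trials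
and raises the threshold by three; conditioning on the new trials changes the tail by
`(81 b₀ - 67 b₁ - 13 b₂ - b₃) / 256`, where `b_i = P(Bin(4m + 7, 3/4) = 3m + 5 + i)`. These lie
past the mode, so they decrease in `i`, and the change is non-negative. Hence the tail increases
in `m` from its value `7290 / 4^7 ≈ 0.4449` at `m = 0`.
-/

/-- The regularized incomplete beta function `I_z(a, b)` for natural parameters `a, b ≥ 1`,
defined via real integrals. -/
noncomputable def regIncBeta (z : ℝ) (a b : ℕ) : ℝ :=
  (∫ t in (0 : ℝ)..z, t ^ (a - 1) * (1 - t) ^ (b - 1)) /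
  (∫ t in (0 : ℝ)..1, t ^ (a - 1) * (1 - t) ^ (b - 1))

open Finset Polynomial

theorem Finset.sum_Icc_succ_succ {M : Type*} [AddCommMonoid M] (f : ℕ → M) (k n : ℕ) :
    ∑ j ∈ Icc (k + 1) (n + 1), f j = ∑ j ∈ Icc k n, f (j + 1) := by
  rw [← map_add_right_Icc, sum_map]
  rfl

namespace bernsteinPolynomial

theorem eval_succ_succ (n j : ℕ) (p : ℝ) :
    (bernsteinPolynomial ℝ (n + 1) (j + 1)).eval p =
      p * (bernsteinPolynomial ℝ n j).eval p
        + (1 - p) * (bernsteinPolynomial ℝ n (j + 1)).eval p := by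
  simp only [bernsteinPolynomial, eval_mul, eval_pow, eval_sub, eval_one, eval_X, eval_natCast,
    Nat.choose_succ_succ', Nat.cast_add, eval_add, Nat.add_sub_add_right]
  rcases lt_or_ge j n with h | h
  · rw [show n - j = n - (j + 1) + 1 by omega]
    ring
  · rw [Nat.choose_eq_zero_of_lt (by omega : n < j + 1), Nat.sub_eq_zero_of_le h,
      Nat.sub_eq_zero_of_le (by omega : n ≤ j + 1)]
    ring

theorem succ_mul_eval_succ (n j : ℕ) (p : ℝ) :
    (j + 1) * (1 - p) * (bernsteinPolynomial ℝ n (j + 1)).eval p =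
      (n - j : ℕ) * p * (bernsteinPolynomial ℝ n j).eval p := by
  rcases lt_or_ge j n with h | h
  · have hchoose : ((n.choose (j + 1) * (j + 1) : ℕ) : ℝ) = (n.choose j * (n - j) : ℕ) :=
      congrArg _ (Nat.choose_succ_right_eq n j)
    push_cast at hchoose
    have hpow : (1 - p) ^ (n - j) = (1 - p) ^ (n - (j + 1)) * (1 - p) := by
      rw [← pow_succ]; congr 1; omega
    simp only [bernsteinPolynomial, eval_mul, eval_pow, eval_sub, eval_one, eval_X, eval_natCast]
    linear_combination (p ^ (j + 1) * (1 - p) ^ (n - (j + 1)) * (1 - p)) * hchoose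
      - ((n - j : ℕ) * p * n.choose j * p ^ j) * hpow
  · rw [eq_zero_of_lt ℝ (by omega : n < j + 1), Nat.sub_eq_zero_of_le h]
    simp

theorem eval_nonneg (n j : ℕ) {p : ℝ} (hp0 : 0 ≤ p) (hp1 : p ≤ 1) :
    0 ≤ (bernsteinPolynomial ℝ n j).eval p := by
  simp only [bernsteinPolynomial, eval_mul, eval_pow, eval_sub, eval_one, eval_X, eval_natCast]
  have : 0 ≤ 1 - p := by linarith
  positivity

theorem eval_succ_le {n j : ℕ} {p : ℝ} (hp0 : 0 ≤ p) (hp1 : p ≤ 1)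
    (hmode : (n + 1) * p ≤ j + 1) :
    (bernsteinPolynomial ℝ n (j + 1)).eval p ≤ (bernsteinPolynomial ℝ n j).eval p := by
  have hj := eval_nonneg n j hp0 hp1
  rcases lt_or_ge j n with h | h
  · have hratio := succ_mul_eval_succ n j p
    rw [Nat.cast_sub h.le] at hratio
    have hpos : 0 < ((j : ℝ) + 1) * (1 - p) := by
      have : (j : ℝ) + 1 < n + 1 := by exact_mod_cast Nat.succ_lt_succ h
      have : p < 1 := by nlinarith
      nlinarith
    refine le_of_mul_le_mul_left ?_ hpos
    rw [hratio]
    exact mul_le_mul_of_nonneg_right (by linarith) hj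
  · rw [eq_zero_of_lt ℝ (Nat.lt_succ_of_le h), eval_zero]
    exact hj

theorem eval_le_of_le {n j i : ℕ} {p : ℝ} (hp0 : 0 ≤ p) (hp1 : p ≤ 1)
    (hmode : (n + 1) * p ≤ j + 1) (hji : j ≤ i) :
    (bernsteinPolynomial ℝ n i).eval p ≤ (bernsteinPolynomial ℝ n j).eval p := by
  induction i, hji using Nat.le_induction with
  | base => rfl
  | succ i hji ih =>
    refine (eval_succ_le hp0 hp1 ?_).trans ih
    have : (j : ℝ) ≤ i := by exact_mod_cast hji
    linarith

end bernsteinPolynomial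

/-- `(bernsteinPolynomial ℝ n j).eval p` is `P(Bin(n, p) = j)`, so this is `P(Bin(n, p) ≥ k)`. -/
noncomputable def binomTail (p : ℝ) (k n : ℕ) : ℝ :=
  ∑ j ∈ Icc k n, (bernsteinPolynomial ℝ n j).eval p

theorem binomTail_eq_zero_of_lt {p : ℝ} {k n : ℕ} (h : n < k) : binomTail p k n = 0 := by
  rw [binomTail, Icc_eq_empty_of_lt h, sum_empty]

theorem binomTail_eq_add_binomTail_succ (p : ℝ) (k n : ℕ) :
    binomTail p k n = (bernsteinPolynomial ℝ n k).eval p + binomTail p (k + 1) n := by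
  rcases le_or_gt k n with h | h
  · rw [binomTail, Icc_eq_cons_Ioc h, sum_cons, ← Icc_add_one_left_eq_Ioc, binomTail]
  · rw [binomTail_eq_zero_of_lt h, binomTail_eq_zero_of_lt (by omega),
      bernsteinPolynomial.eq_zero_of_lt ℝ h, eval_zero, add_zero]

theorem binomTail_succ_succ (p : ℝ) (k n : ℕ) :
    binomTail p (k + 1) (n + 1) = p * binomTail p k n + (1 - p) * binomTail p (k + 1) n := by
  have hextend : binomTail p (k + 1) n =
      ∑ j ∈ Icc (k + 1) (n + 1), (bernsteinPolynomial ℝ n j).eval p := by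
    refine sum_subset (Icc_subset_Icc_right n.le_succ) fun j hj hjn => ?_
    rw [bernsteinPolynomial.eq_zero_of_lt ℝ (by simp_all), eval_zero]
  rw [hextend, binomTail, binomTail, sum_Icc_succ_succ, sum_Icc_succ_succ, mul_sum, mul_sum,
    ← sum_add_distrib]
  exact sum_congr rfl fun j _ => bernsteinPolynomial.eval_succ_succ n j p

theorem binomTail_succ_succ_le {p : ℝ} (hp0 : 0 ≤ p) (hp1 : p ≤ 1) (k n : ℕ) :
    binomTail p (k + 1) (n + 1) ≤ binomTail p k n := by
  have hpeel := binomTail_eq_add_binomTail_succ p k n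
  have hk := bernsteinPolynomial.eval_nonneg n k hp0 hp1
  rw [binomTail_succ_succ]
  nlinarith

theorem binomTail_add_add_le {p : ℝ} (hp0 : 0 ≤ p) (hp1 : p ≤ 1) (k n i : ℕ) :
    binomTail p (k + i) (n + i) ≤ binomTail p k n := by
  induction i with
  | zero => rfl
  | succ i ih => exact (binomTail_succ_succ_le hp0 hp1 _ _).trans ih

/-- The coefficients are the probabilities of `4, ≤ 2, ≤ 1, 0` successes in four new trials. -/
theorem binomTail_add_four (p : ℝ) (k n : ℕ) :
    binomTail p (k + 4) (n + 4) = binomTail p (k + 1) n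
      + p ^ 4 * (bernsteinPolynomial ℝ n k).eval p
      - (6 * p ^ 2 * (1 - p) ^ 2 + 4 * p * (1 - p) ^ 3 + (1 - p) ^ 4)
        * (bernsteinPolynomial ℝ n (k + 1)).eval p
      - (4 * p * (1 - p) ^ 3 + (1 - p) ^ 4) * (bernsteinPolynomial ℝ n (k + 2)).eval p
      - (1 - p) ^ 4 * (bernsteinPolynomial ℝ n (k + 3)).eval p := by
  simp only [binomTail_succ_succ]
  have h0 := binomTail_eq_add_binomTail_succ p k n
  have h1 := binomTail_eq_add_binomTail_succ p (k + 1) n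
  have h2 := binomTail_eq_add_binomTail_succ p (k + 2) n
  have h3 := binomTail_eq_add_binomTail_succ p (k + 3) n
  linear_combination p ^ 4 * h0
    - (6 * p ^ 2 * (1 - p) ^ 2 + 4 * p * (1 - p) ^ 3 + (1 - p) ^ 4) * h1
    - (4 * p * (1 - p) ^ 3 + (1 - p) ^ 4) * h2 - (1 - p) ^ 4 * h3

theorem binomTail_zero_left {k n : ℕ} (hk : k ≠ 0) : binomTail 0 k n = 0 :=
  sum_eq_zero fun j hj => by
    rw [bernsteinPolynomial.eval_at_0, if_neg (by simp at hj; omega)]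

theorem binomTail_one_left {k n : ℕ} (h : k ≤ n) : binomTail 1 k n = 1 := by
  simp [binomTail, bernsteinPolynomial.eval_at_1, h]

theorem hasDerivAt_binomTail_succ_succ {k n : ℕ} (h : k ≤ n) (p : ℝ) :
    HasDerivAt (fun p => binomTail p (k + 1) (n + 1))
      ((n + 1) * (bernsteinPolynomial ℝ n k).eval p) p := by
  have hderiv : derivative (∑ j ∈ Icc (k + 1) (n + 1), bernsteinPolynomial ℝ (n + 1) j) =
      (n + 1) * bernsteinPolynomial ℝ n k := by
    rw [derivative_sum, sum_Icc_succ_succ]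
    simp only [bernsteinPolynomial.derivative_succ_aux, ← mul_sum]
    have htel := sum_Icc_sub h (bernsteinPolynomial ℝ n)
    rw [bernsteinPolynomial.eq_zero_of_lt ℝ n.lt_succ_self, zero_sub] at htel
    simp only [sum_sub_distrib] at htel ⊢
    linear_combination -(↑n + 1 : ℝ[X]) * htel
  simpa only [binomTail, ← eval_finsetSum, hderiv, eval_mul, eval_add, eval_natCast, eval_one]
    using (∑ j ∈ Icc (k + 1) (n + 1), bernsteinPolynomial ℝ (n + 1) j).hasDerivAt p

theorem integral_pow_mul_one_sub_pow (a b : ℕ) (z : ℝ) :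
    ∫ t in (0 : ℝ)..z, t ^ a * (1 - t) ^ b =
      binomTail z (a + 1) (a + b + 1) / ((a + b + 1) * (a + b).choose a) := by
  have hchoose : ((a + b).choose a : ℝ) ≠ 0 :=
    mod_cast (Nat.choose_pos (Nat.le_add_right a b)).ne'
  have hderiv : ∀ t ∈ Set.uIcc 0 z, HasDerivAt
      (fun p => binomTail p (a + 1) (a + b + 1) / ((a + b + 1) * (a + b).choose a))
      (t ^ a * (1 - t) ^ b) t := by
    intro t _
    refine ((hasDerivAt_binomTail_succ_succ (Nat.le_add_right a b) t).div_const _).congr_deriv ?_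
    simp only [bernsteinPolynomial, eval_mul, eval_pow, eval_sub, eval_one, eval_X, eval_natCast,
      Nat.add_sub_cancel_left, Nat.cast_add]
    field_simp
  rw [intervalIntegral.integral_eq_sub_of_hasDerivAt hderiv
      (Continuous.intervalIntegrable (by fun_prop) _ _),
    binomTail_zero_left a.succ_ne_zero, zero_div, sub_zero]

theorem regIncBeta_add_one (z : ℝ) (a b : ℕ) :
    regIncBeta z (a + 1) (b + 1) = binomTail z (a + 1) (a + b + 1) := by
  have hc : ((a + b + 1) * (a + b).choose a : ℝ) ≠ 0 := by
    have := Nat.choose_pos (Nat.le_add_right a b)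
    positivity
  rw [regIncBeta, Nat.add_sub_cancel, Nat.add_sub_cancel, integral_pow_mul_one_sub_pow,
    integral_pow_mul_one_sub_pow, binomTail_one_left (by omega), div_div_div_cancel_right₀ hc,
    div_one]

theorem binomTail_three_quarters_le_succ (m : ℕ) :
    binomTail (3 / 4) (3 * m + 6) (4 * m + 7) ≤
      binomTail (3 / 4) (3 * (m + 1) + 6) (4 * (m + 1) + 7) := by
  have hmode : ((4 * m + 7 : ℕ) + 1 : ℝ) * (3 / 4) ≤ (3 * m + 5 : ℕ) + 1 := by
    push_cast; linarith
  have hle (i : ℕ) := bernsteinPolynomial.eval_le_of_le (by norm_num) (by norm_num) hmode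
    (Nat.le_add_right (3 * m + 5) i)
  have h3 := bernsteinPolynomial.eval_nonneg (4 * m + 7) (3 * m + 5 + 3)
    (p := 3 / 4) (by norm_num) (by norm_num)
  rw [show 3 * (m + 1) + 6 = 3 * m + 5 + 4 by ring, show 4 * (m + 1) + 7 = 4 * m + 7 + 4 by ring,
    binomTail_add_four (3 / 4) (3 * m + 5) (4 * m + 7)]
  norm_num
  linarith [hle 1, hle 2, hle 3]

theorem binomTail_three_quarters_gt (m : ℕ) :
    0.444 < binomTail (3 / 4) (3 * m + 6) (4 * m + 7) := by
  induction m with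
  | zero => norm_num [binomTail, bernsteinPolynomial, sum_Icc_succ_top, Nat.choose]
  | succ m ih => exact ih.trans_le (binomTail_three_quarters_le_succ m)

/-- For all naturals `x, y` with `y ≥ 2` and `3y − 2 ≤ x ≤ 3y`,
`I_{3/4}(x, y) > 0.444`. -/
theorem regIncBeta_near_line_gt (x y : ℕ) (hy : 2 ≤ y)
    (hx1 : 3 * y - 2 ≤ x) (hx2 : x ≤ 3 * y) :
    regIncBeta (3 / 4) x y > 0.444 := by
  obtain ⟨m, rfl⟩ : ∃ m, y = m + 2 := ⟨y - 2, by omega⟩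
  obtain ⟨a, rfl⟩ : ∃ a, x = a + 1 := ⟨x - 1, by omega⟩
  obtain ⟨i, hi⟩ : ∃ i, a + 1 + i = 3 * m + 6 := ⟨3 * m + 6 - (a + 1), by omega⟩
  have hdiag := binomTail_add_add_le (p := 3 / 4) (by norm_num) (by norm_num)
    (a + 1) (a + (m + 1) + 1) i
  rw [hi, show a + (m + 1) + 1 + i = 4 * m + 7 by omega] at hdiag
  rw [regIncBeta_add_one]
  linarith [binomTail_three_quarters_gt m]
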